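/- arXiv:2503.04255 — 2 statements merged into one kernel-verified Lean document; each statement's English description precedes it below -/
import Mathlib

section
/- Let φ,ψ ∈ L²(ℝ) be such that the scalar family F = {φ(·−k): k∈ℤ} ∪ {2^{j/2}ψ(2^j·−k): j∈ℕ, k∈ℤ} is orthonormal in L²(ℝ). Then the vector system {Φ_k: k∈ℤ} ∪ {Ψ_{j,k}: j odd, k∈ℤ} is *-orthonormal in L²(ℝ,ℝ²): for all k,k'∈ℤ and all odd j,j'≥1, ⟨Φ_k, Φ_{k'}⟩_* = δ_{k,k'} I₂, ⟨Φ_k, Ψ_{j,k'}⟩_* = 0₂ₓ₂, and ⟨Ψ_{j,k}, Ψ_{j',k'}⟩_* = δ_{j,j'} δ_{k,k'} I₂. -/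
open MeasureTheory

/-- `Φ_k(x) = (φ(x−k), ψ(x−k))ᵀ`. -/
noncomputable def PhiVec (φ ψ : ℝ → ℝ) (k : ℤ) (x : ℝ) : Fin 2 → ℝ :=
  ![φ (x - k), ψ (x - k)]

/-- For odd `j ≥ 1`, `Ψ_{j,k}(x) = (2^{j/2} ψ(2^j x − k), 2^{(j+1)/2} ψ(2^{j+1} x − k))ᵀ`. -/
noncomputable def PsiVec (ψ : ℝ → ℝ) (j : ℕ) (k : ℤ) (x : ℝ) : Fin 2 → ℝ :=
  ![(2 : ℝ) ^ ((j : ℝ) / 2) * ψ ((2 : ℝ) ^ j * x - k),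
    (2 : ℝ) ^ (((j : ℝ) + 1) / 2) * ψ ((2 : ℝ) ^ (j + 1) * x - k)]

/-- If the scalar family `{φ(·−k)} ∪ {2^{j/2}ψ(2^j·−k)}` is orthonormal in `L²(ℝ)`,
then the vector system `{Φ_k} ∪ {Ψ_{j,k} : j odd}` is `*`-orthonormal in `L²(ℝ, ℝ²)`:
`⟨Φ_k, Φ_{k'}⟩_* = δ_{k,k'} I₂`, `⟨Φ_k, Ψ_{j,k'}⟩_* = 0`, and
`⟨Ψ_{j,k}, Ψ_{j',k'}⟩_* = δ_{j,j'} δ_{k,k'} I₂`. -/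
theorem vector_system_star_orthonormal (φ ψ : ℝ → ℝ)
    (hφ : MemLp φ 2 (volume : Measure ℝ)) (hψ : MemLp ψ 2 (volume : Measure ℝ))
    (hφφ : ∀ k k' : ℤ,
      ∫ x : ℝ, φ (x - k) * φ (x - k') = if k = k' then 1 else 0)
    (hφψ : ∀ k : ℤ, ∀ j : ℕ, ∀ k' : ℤ,
      ∫ x : ℝ, φ (x - k) * ((2 : ℝ) ^ ((j : ℝ) / 2) * ψ ((2 : ℝ) ^ j * x - k')) = 0)
    (hψψ : ∀ j j' : ℕ, ∀ k k' : ℤ,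
      ∫ x : ℝ, ((2 : ℝ) ^ ((j : ℝ) / 2) * ψ ((2 : ℝ) ^ j * x - k)) *
          ((2 : ℝ) ^ ((j' : ℝ) / 2) * ψ ((2 : ℝ) ^ j' * x - k')) =
        if j = j' ∧ k = k' then 1 else 0) :
    (∀ k k' : ℤ, ∀ i i' : Fin 2,
        ∫ x : ℝ, PhiVec φ ψ k x i * PhiVec φ ψ k' x i' =
          if k = k' ∧ i = i' then 1 else 0) ∧
    (∀ k : ℤ, ∀ j : ℕ, Odd j → ∀ k' : ℤ, ∀ i i' : Fin 2,
        ∫ x : ℝ, PhiVec φ ψ k x i * PsiVec ψ j k' x i' = 0) ∧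
    (∀ j j' : ℕ, Odd j → Odd j' → ∀ k k' : ℤ, ∀ i i' : Fin 2,
        ∫ x : ℝ, PsiVec ψ j k x i * PsiVec ψ j' k' x i' =
          if j = j' ∧ k = k' ∧ i = i' then 1 else 0) := by
  have hφψ' : ∀ k : ℤ, ∀ j : ℕ, ∀ k' : ℤ,
      ∫ x : ℝ, ((2 : ℝ) ^ ((j : ℝ) / 2) * ψ ((2 : ℝ) ^ j * x - k')) * φ (x - k) = 0 := by
    intro k j k'
    rw [show (fun x : ℝ => ((2 : ℝ) ^ ((j : ℝ) / 2) * ψ ((2 : ℝ) ^ j * x - k')) * φ (x - k))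
        = (fun x : ℝ => φ (x - k) * ((2 : ℝ) ^ ((j : ℝ) / 2) * ψ ((2 : ℝ) ^ j * x - k'))) from by
      funext x; ring]
    exact hφψ k j k'
  have hφψ0 : ∀ k k' : ℤ, ∫ x : ℝ, φ (x - k) * ψ (x - k') = 0 := by
    intro k k'
    have h := hφψ k 0 k'
    norm_num at h
    exact h
  have hψφ0 : ∀ k k' : ℤ, ∫ x : ℝ, ψ (x - k) * φ (x - k') = 0 := by
    intro k k'
    have h := hφψ' k' 0 k
    norm_num at h
    exact h
  have hψψ0 : ∀ k k' : ℤ, ∫ x : ℝ, ψ (x - k) * ψ (x - k') = if k = k' then 1 else 0 := by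
    intro k k'
    have h := hψψ 0 0 k k'
    norm_num at h
    exact h
  have hψψ0j : ∀ j : ℕ, j ≠ 0 → ∀ k k' : ℤ,
      ∫ x : ℝ, ψ (x - k) * ((2 : ℝ) ^ ((j : ℝ) / 2) * ψ ((2 : ℝ) ^ j * x - k')) = 0 := by
    intro j hj k k'
    have h := hψψ 0 j k k'
    rw [if_neg (by simp [Ne.symm hj])] at h
    norm_num at h
    exact h
  have hψψj0 : ∀ j : ℕ, j ≠ 0 → ∀ k k' : ℤ,
      ∫ x : ℝ, ((2 : ℝ) ^ ((j : ℝ) / 2) * ψ ((2 : ℝ) ^ j * x - k)) * ψ (x - k') = 0 := by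
    intro j hj k k'
    have h := hψψ j 0 k k'
    rw [if_neg (by simp [hj])] at h
    norm_num at h
    exact h
  refine ⟨?_, ?_, ?_⟩
  · intro k k' i i'
    fin_cases i <;> fin_cases i' <;>
      simp only [PhiVec, Matrix.cons_val_zero, Matrix.cons_val_one, Matrix.head_cons,
        Fin.mk_zero, Fin.mk_one]
    · rw [hφφ k k']; by_cases h : k = k' <;> simp [h]
    · rw [hφψ0 k k']; simp
    · rw [hψφ0 k k']; simp
    · rw [hψψ0 k k']; by_cases h : k = k' <;> simp [h]
  · intro k j hj k' i i'
    fin_cases i <;> fin_cases i' <;>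
      simp only [PsiVec, PhiVec, Matrix.cons_val_zero, Matrix.cons_val_one, Matrix.head_cons]
    · exact hφψ k j k'
    · have h := hφψ k (j + 1) k'
      push_cast at h
      exact h
    · exact hψψ0j j hj.pos.ne' k k'
    · have h := hψψ0j (j + 1) (Nat.succ_ne_zero j) k k'
      push_cast at h
      exact h
  · intro j j' hj hj' k k' i i'
    obtain ⟨a, ha⟩ := hj
    obtain ⟨b, hb⟩ := hj'
    fin_cases i <;> fin_cases i' <;>
      simp only [PsiVec, Matrix.cons_val_zero, Matrix.cons_val_one, Matrix.head_cons,
        Fin.mk_zero, Fin.mk_one]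
    · rw [hψψ j j' k k']
      by_cases h1 : j = j' <;> by_cases h2 : k = k' <;> simp [h1, h2]
    · have h := hψψ j (j' + 1) k k'
      push_cast at h
      rw [if_neg (by rintro ⟨h1, -⟩; omega)] at h
      rw [h]
      simp
    · have h := hψψ (j + 1) j' k k'
      push_cast at h
      rw [if_neg (by rintro ⟨h1, -⟩; omega)] at h
      rw [h]
      simp
    · have h := hψψ (j + 1) (j' + 1) k k'
      push_cast at h
      rw [h]
      by_cases h1 : j = j' <;> by_cases h2 : k = k' <;> simp [h1, h2] <;> omega
end

section
/- Let φ,ψ ∈ L²(ℝ) be such that the scalar family F = {φ(·−k): k∈ℤ} ∪ {2^{j/2}ψ(2^j·−k): j∈ℕ, k∈ℤ} is an orthonormal basis of L²(ℝ) (orthonormal with dense linear span). Then the ℝ-linear span of the set of vector-valued functions {x ↦ A·Φ_k(x) : A a 2×2 real matrix, k∈ℤ} ∪ {x ↦ A·Ψ_{j,k}(x) : A a 2×2 real matrix, j odd, k∈ℤ} is dense in L²(ℝ,ℝ²). -/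
open MeasureTheory

/-- The elements of `L²(ℝ)` represented by members of the scalar family
`F = {φ(·−k) : k ∈ ℤ} ∪ {2^{j/2}ψ(2^j·−k) : j ∈ ℕ, k ∈ ℤ}`. -/
def scalarFamily (φ ψ : ℝ → ℝ) : Set (Lp ℝ 2 (volume : Measure ℝ)) :=
  {F | (∃ k : ℤ, ⇑F =ᵐ[volume] fun x : ℝ => φ (x - k)) ∨
    (∃ j : ℕ, ∃ k : ℤ,
      ⇑F =ᵐ[volume] fun x : ℝ => (2 : ℝ) ^ ((j : ℝ) / 2) * ψ ((2 : ℝ) ^ j * x - k))}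

/-- The elements of `L²(ℝ, ℝ²)` represented by `A·Φ_k` or `A·Ψ_{j,k}` (`A` a `2×2`
real matrix, `j` odd). -/
def vectorFamily (φ ψ : ℝ → ℝ) :
    Set (Lp (EuclideanSpace ℝ (Fin 2)) 2 (volume : Measure ℝ)) :=
  {F | ∃ A : Matrix (Fin 2) (Fin 2) ℝ,
    (∃ k : ℤ, ∀ᵐ x : ℝ ∂volume, ∀ i : Fin 2, F x i = A.mulVec (PhiVec φ ψ k x) i) ∨
    (∃ j : ℕ, ∃ k : ℤ, Odd j ∧
      ∀ᵐ x : ℝ ∂volume, ∀ i : Fin 2, F x i = A.mulVec (PsiVec ψ j k x) i)}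

/-- Embedding of scalars into coordinate `i` of `ℝ²`, as a continuous linear map. -/
noncomputable def sCLM (i : Fin 2) : ℝ →L[ℝ] EuclideanSpace ℝ (Fin 2) :=
  (ContinuousLinearMap.id ℝ ℝ).smulRight (EuclideanSpace.single i 1)

lemma sCLM_apply (i i' : Fin 2) (c : ℝ) : sCLM i c i' = if i' = i then c else 0 := by
  simp [sCLM, EuclideanSpace.single_apply]

lemma std_mulVec (i i' : Fin 2) (j : Fin 2) (v : Fin 2 → ℝ) :
    (Matrix.single i j (1:ℝ)).mulVec v i' = if i' = i then v j else 0 := by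
  simp [Matrix.mulVec, Matrix.single, dotProduct, Fin.sum_univ_two]
  fin_cases i <;> fin_cases i' <;> fin_cases j <;> simp

/-- Each scalar family member, embedded in coordinate `i`, lies in the vector family. -/
lemma single_mem_vectorFamily (φ ψ : ℝ → ℝ) (F : Lp ℝ 2 (volume : Measure ℝ))
    (hF : F ∈ scalarFamily φ ψ) (i : Fin 2) :
    (sCLM i).compLp F ∈ vectorFamily φ ψ := by
  have hco := (sCLM i).coeFn_compLp F
  rcases hF with ⟨k, hk⟩ | ⟨j, k, hjk⟩
  · refine ⟨Matrix.single i 0 1, Or.inl ⟨k, ?_⟩⟩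
    filter_upwards [hco, hk] with x h1 h2 i'
    rw [h1, std_mulVec, sCLM_apply, h2]
    simp [PhiVec]
  · -- cases on j
    rcases Nat.even_or_odd j with hj | hj
    · rcases Nat.eq_zero_or_pos j with rfl | hpos
      · refine ⟨Matrix.single i 1 1, Or.inl ⟨k, ?_⟩⟩
        filter_upwards [hco, hjk] with x h1 h2 i'
        rw [h1, std_mulVec, sCLM_apply, h2]
        norm_num [PhiVec]
      · obtain ⟨m, rfl⟩ : ∃ m, j = m + 1 := ⟨j - 1, (Nat.succ_pred_eq_of_pos hpos).symm⟩
        have hm : Odd m := Nat.not_even_iff_odd.mp (Nat.even_add_one.mp hj)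
        refine ⟨Matrix.single i 1 1, Or.inr ⟨m, k, hm, ?_⟩⟩
        filter_upwards [hco, hjk] with x h1 h2 i'
        rw [h1, std_mulVec, sCLM_apply, h2]
        simp only [PsiVec, Matrix.cons_val_one, Matrix.head_cons]
        push_cast
        ring_nf
    · refine ⟨Matrix.single i 0 1, Or.inr ⟨j, k, hj, ?_⟩⟩
      filter_upwards [hco, hjk] with x h1 h2 i'
      rw [h1, std_mulVec, sCLM_apply, h2]
      simp [PsiVec]

/-- If the scalar family `F = {φ(·−k)} ∪ {2^{j/2}ψ(2^j·−k)}` is an orthonormal basis of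
`L²(ℝ)` (orthonormal with dense linear span), then the ℝ-linear span of
`{A·Φ_k} ∪ {A·Ψ_{j,k} : j odd}` is dense in `L²(ℝ, ℝ²)`. -/
theorem vector_system_span_dense (φ ψ : ℝ → ℝ)
    (hφ : MemLp φ 2 (volume : Measure ℝ)) (hψ : MemLp ψ 2 (volume : Measure ℝ))
    (hφφ : ∀ k k' : ℤ,
      ∫ x : ℝ, φ (x - k) * φ (x - k') = if k = k' then 1 else 0)
    (hφψ : ∀ k : ℤ, ∀ j : ℕ, ∀ k' : ℤ,
      ∫ x : ℝ, φ (x - k) * ((2 : ℝ) ^ ((j : ℝ) / 2) * ψ ((2 : ℝ) ^ j * x - k')) = 0)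
    (hψψ : ∀ j j' : ℕ, ∀ k k' : ℤ,
      ∫ x : ℝ, ((2 : ℝ) ^ ((j : ℝ) / 2) * ψ ((2 : ℝ) ^ j * x - k)) *
          ((2 : ℝ) ^ ((j' : ℝ) / 2) * ψ ((2 : ℝ) ^ j' * x - k')) =
        if j = j' ∧ k = k' then 1 else 0)
    (hdense : Dense (↑(Submodule.span ℝ (scalarFamily φ ψ)) :
      Set (Lp ℝ 2 (volume : Measure ℝ)))) :
    Dense (↑(Submodule.span ℝ (vectorFamily φ ψ)) :
      Set (Lp (EuclideanSpace ℝ (Fin 2)) 2 (volume : Measure ℝ))) := by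
  rw [Submodule.dense_iff_topologicalClosure_eq_top,
    Submodule.topologicalClosure_eq_top_iff]
  rw [Submodule.eq_bot_iff]
  intro g hg
  -- g is orthogonal to everything in the span of the vector family
  have hg' : ∀ v ∈ vectorFamily φ ψ, (inner ℝ v g : ℝ) = 0 := fun v hv =>
    (Submodule.mem_orthogonal _ g).1 hg v (Submodule.subset_span hv)
  -- components of g
  have hcomp : ∀ i : Fin 2, (EuclideanSpace.proj (𝕜 := ℝ) i).compLp g = 0 := by
    intro i
    set gi := (EuclideanSpace.proj (𝕜 := ℝ) i).compLp g with hgi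
    -- gi is orthogonal to the scalar family
    have key : ∀ F ∈ scalarFamily φ ψ, (inner ℝ F gi : ℝ) = 0 := by
      intro F hF
      have h0 := hg' _ (single_mem_vectorFamily φ ψ F hF i)
      rw [MeasureTheory.L2.inner_def] at h0 ⊢
      rw [← h0]
      refine integral_congr_ae ?_
      filter_upwards [(sCLM i).coeFn_compLp F, (EuclideanSpace.proj (𝕜 := ℝ) i).coeFn_compLp g]
        with x h1 h2
      rw [h2, h1]
      simp only [RCLike.inner_apply, conj_trivial, PiLp.inner_apply]
      rw [Fin.sum_univ_two]
      fin_cases i <;> simp [sCLM_apply, EuclideanSpace.proj] <;> ring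
    -- inner with gi vanishes on the span, hence everywhere by density
    have hspan : ∀ v ∈ Submodule.span ℝ (scalarFamily φ ψ), (inner ℝ v gi : ℝ) = 0 := by
      intro v hv
      induction hv using Submodule.span_induction with
      | mem v hv => exact key v hv
      | zero => simp
      | add v w _ _ hv hw => rw [inner_add_left, hv, hw, add_zero]
      | smul c v _ hv => rw [inner_smul_left, hv, mul_zero]
    have : (fun v : Lp ℝ 2 (volume : Measure ℝ) => (inner ℝ v gi : ℝ)) = fun _ => (0:ℝ) :=
      Continuous.ext_on hdense (continuous_id.inner continuous_const) continuous_const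
        (fun v hv => hspan v hv)
    have := congrFun this gi
    simpa [inner_self_eq_zero] using this
  -- conclude g = 0
  have h0 : ∀ i : Fin 2, ∀ᵐ x : ℝ ∂volume, g x i = 0 := by
    intro i
    have h1 := (EuclideanSpace.proj (𝕜 := ℝ) i).coeFn_compLp g
    have h2 : ⇑((EuclideanSpace.proj (𝕜 := ℝ) i).compLp g) =ᵐ[volume] 0 := by
      rw [hcomp i]; exact Lp.coeFn_zero _ _ _
    filter_upwards [h1, h2] with x a b
    have : EuclideanSpace.proj (𝕜 := ℝ) i (g x) = 0 := by rw [← a, b]; rfl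
    simpa using this
  have hae : ⇑g =ᵐ[volume] 0 := by
    filter_upwards [h0 0, h0 1] with x a b
    ext i
    fin_cases i <;> simpa
  exact (Lp.eq_zero_iff_ae_eq_zero).mpr hae
end
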